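/- Under the assumptions that Φ(x,·) is μ-strongly concave with ∇_y Φ(·,y) being L_{yx}-Lipschitz in x, ∇_x Φ(·,y) being L_{xx}-Lipschitz in x and ∇_x Φ(x,·) being L_{xy}-Lipschitz in y, and h proper convex l.s.c., the value function φ(x) = max_y (Φ(x,y) - h(y)) is continuously differentiable with ∇φ(x) = ∇_x Φ(x, y*(x)), and ∇φ is L_φ-Lipschitz with L_φ = L_{xx} + L_{xy}L_{yx}/μ. -/

import Mathlib

/-!
Strong concavity of `Φ x - h` gives quadratic growth around its maximiser `ystar x`. Adding the
growth inequalities at `x₁` and `x₂` and bounding the remaining cross difference of `Φ` by the mean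
value inequality for `∇_y Φ` shows that `ystar` is `Lyx / μ`-Lipschitz. Maximality squeezes
`φ x' - φ x` between `Φ x' y - Φ x y` at `y = ystar x` and at `y = ystar x'`; the descent lemma in
`x`, together with the Lipschitz bound on `ystar`, puts both within `O(‖x' - x‖²)` of
`⟪∇_x Φ (x, ystar x), x' - x⟫`.
-/

open scoped RealInnerProductSpace Topology
open Set Filter Asymptotics

section Gradient

variable {F : Type*} [NormedAddCommGroup F] [InnerProductSpace ℝ F] [CompleteSpace F]
  {f g : F → ℝ} {f' g' : F} {x : F}

lemma HasGradientAt.sub (hf : HasGradientAt f f' x) (hg : HasGradientAt g g' x) :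
    HasGradientAt (fun z => f z - g z) (f' - g') x := by
  rw [hasGradientAt_iff_hasFDerivAt, map_sub]
  exact hf.hasFDerivAt.sub hg.hasFDerivAt

lemma abs_sub_le_of_norm_gradient_le {f' : F → F} {C : ℝ} (hf : ∀ z, HasGradientAt f (f' z) z)
    (bound : ∀ z, ‖f' z‖ ≤ C) (a b : F) : |f b - f a| ≤ C * ‖b - a‖ := by
  simpa [Real.norm_eq_abs] using Convex.norm_image_sub_le_of_norm_hasFDerivWithin_le
    (fun z _ => (hf z).hasFDerivAt.hasFDerivWithinAt)
    (fun z _ => ((InnerProductSpace.toDual ℝ F).norm_map (f' z)).trans_le (bound z))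
    convex_univ (mem_univ a) (mem_univ b)

lemma abs_sub_sub_inner_le_of_lipschitz_gradient {f' : F → F} {L : ℝ}
    (hf : ∀ z, HasGradientAt f (f' z) z) (hlip : ∀ z₁ z₂, ‖f' z₁ - f' z₂‖ ≤ L * ‖z₁ - z₂‖)
    (a b : F) : |f b - f a - ⟪f' a, b - a⟫| ≤ L * ‖b - a‖ ^ 2 := by
  rcases eq_or_ne a b with rfl | hab
  · simp
  have hL : 0 ≤ L := (mul_nonneg_iff_of_pos_right (norm_pos_iff.2 (sub_ne_zero.2 hab))).1
    ((norm_nonneg _).trans (hlip a b))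
  have key := Convex.norm_image_sub_le_of_norm_hasFDerivWithin_le'
    (φ := InnerProductSpace.toDual ℝ F (f' a)) (C := L * ‖b - a‖)
    (fun z _ => (hf z).hasFDerivAt.hasFDerivWithinAt)
    (fun z hz => by
      rw [← map_sub, LinearIsometryEquiv.norm_map]
      exact (hlip z a).trans (by gcongr; exact norm_sub_le_of_mem_segment hz))
    (convex_segment a b) (left_mem_segment ℝ a b) (right_mem_segment ℝ a b)
  rw [InnerProductSpace.toDual_apply_apply, Real.norm_eq_abs] at key
  linarith

lemma hasGradientAt_of_abs_sub_sub_inner_le {C : ℝ}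
    (h : ∀ x', |f x' - f x - ⟪f', x' - x⟫| ≤ C * ‖x' - x‖ ^ 2) : HasGradientAt f f' x := by
  rw [hasGradientAt_iff_isLittleO_nhds_zero]
  refine IsBigO.trans_isLittleO (IsBigO.of_bound C (Eventually.of_forall fun v => ?_))
    (isLittleO_norm_pow_id one_lt_two)
  simpa [Real.norm_eq_abs] using h (x + v)

end Gradient

section ExtendedConvex

variable {E : Type*} [AddCommGroup E] [Module ℝ E] {h : E → EReal}

lemma convexOn_toReal_setOf_ne_top (hnobot : ∀ y, h y ≠ ⊥)
    (hconv : ∀ y₁ y₂ : E, ∀ t : ℝ, 0 ≤ t → t ≤ 1 →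
      h (t • y₁ + (1 - t) • y₂) ≤ (t : EReal) * h y₁ + ((1 - t : ℝ) : EReal) * h y₂) :
    ConvexOn ℝ {y | h y ≠ ⊤} (fun y => (h y).toReal) := by
  have key : ∀ y₁, h y₁ ≠ ⊤ → ∀ y₂, h y₂ ≠ ⊤ → ∀ a b : ℝ, 0 ≤ a → 0 ≤ b → a + b = 1 →
      h (a • y₁ + b • y₂) ≤ Real.toEReal (a * (h y₁).toReal + b * (h y₂).toReal) := by
    intro y₁ h₁ y₂ h₂ a b ha hb hab
    obtain rfl : b = 1 - a := eq_sub_of_add_eq' hab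
    rw [EReal.coe_add, EReal.coe_mul, EReal.coe_mul, EReal.coe_toReal h₁ (hnobot y₁),
      EReal.coe_toReal h₂ (hnobot y₂)]
    exact hconv y₁ y₂ a ha (by linarith)
  refine ⟨fun y₁ h₁ y₂ h₂ a b ha hb hab =>
    ne_top_of_le_ne_top (EReal.coe_ne_top _) (key y₁ h₁ y₂ h₂ a b ha hb hab),
    fun y₁ h₁ y₂ h₂ a b ha hb hab => ?_⟩
  have := EReal.toReal_le_toReal (key y₁ h₁ y₂ h₂ a b ha hb hab) (hnobot _) (EReal.coe_ne_top _)
  rwa [EReal.toReal_coe] at this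

end ExtendedConvex

lemma isMaxOn_sub_toReal {α : Type*} {f : α → ℝ} {h : α → EReal} {a : α} (hnobot : ∀ y, h y ≠ ⊥)
    (hmax : IsMaxOn (fun y => (f y : EReal) - h y) univ a) (ha : h a ≠ ⊤) :
    IsMaxOn (fun y => f y - (h y).toReal) {y | h y ≠ ⊤} a := fun y hy => by
  have : (f y : EReal) - h y ≤ f a - h a := hmax (mem_univ y)
  rw [← EReal.coe_toReal hy (hnobot y), ← EReal.coe_toReal ha (hnobot a),
    ← EReal.coe_sub, ← EReal.coe_sub] at this
  exact_mod_cast this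

section StrongConcavity

variable {E : Type*} [NormedAddCommGroup E] [NormedSpace ℝ E] {s t : Set E} {m : ℝ}
  {f g k : E → ℝ} {a b z : E}

lemma StrongConcaveOn.sub_convexOn (hf : StrongConcaveOn t m f) (hst : s ⊆ t)
    (hk : ConvexOn ℝ s k) : StrongConcaveOn s m (fun y => f y - k y) :=
  ⟨hk.1, fun x hx y hy a b ha hb hab => by
    have h₁ := hf.2 (hst hx) (hst hy) ha hb hab
    have h₂ := hk.2 hx hy ha hb hab
    simp only [smul_eq_mul] at h₁ h₂ ⊢
    linarith⟩

lemma StrongConcaveOn.add_sq_norm_sub_le_of_isMaxOn (hf : StrongConcaveOn s m f)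
    (hmax : IsMaxOn f s a) (ha : a ∈ s) (hz : z ∈ s) :
    f z + m / 2 * ‖z - a‖ ^ 2 ≤ f a := by
  have hseg : ∀ t ∈ Ioo (0 : ℝ) 1, f z + (1 - t) * (m / 2 * ‖z - a‖ ^ 2) ≤ f a := by
    intro t ⟨ht₀, ht₁⟩
    have hcomb := hf.2 hz ha ht₀.le (sub_nonneg.2 ht₁.le) (add_sub_cancel t 1)
    have hle : f (t • z + (1 - t) • a) ≤ f a :=
      hmax (hf.1 hz ha ht₀.le (sub_nonneg.2 ht₁.le) (add_sub_cancel t 1))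
    simp only [smul_eq_mul] at hcomb
    nlinarith
  have hlim : Tendsto (fun t : ℝ => f z + (1 - t) * (m / 2 * ‖z - a‖ ^ 2)) (𝓝[>] 0)
      (𝓝 (f z + m / 2 * ‖z - a‖ ^ 2)) := tendsto_nhdsWithin_of_tendsto_nhds <|
    (by fun_prop : Continuous fun t : ℝ => f z + (1 - t) * (m / 2 * ‖z - a‖ ^ 2)).tendsto' 0 _
      (by simp)
  exact le_of_tendsto hlim (eventually_of_mem (Ioo_mem_nhdsGT one_pos) hseg)

lemma StrongConcaveOn.norm_sub_le_of_isMaxOn {C : ℝ} (hm : 0 < m) (hf : StrongConcaveOn s m f)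
    (hg : StrongConcaveOn s m g) (ha : a ∈ s) (hb : b ∈ s) (hfa : IsMaxOn f s a)
    (hgb : IsMaxOn g s b) (hC : 0 ≤ C) (hfg : (f a - g a) - (f b - g b) ≤ C * ‖a - b‖) :
    ‖a - b‖ ≤ C / m := by
  have hfb := hf.add_sq_norm_sub_le_of_isMaxOn hfa ha hb
  have hga := hg.add_sq_norm_sub_le_of_isMaxOn hgb hb ha
  rw [norm_sub_rev] at hfb
  have hsq : m * ‖a - b‖ ^ 2 ≤ C * ‖a - b‖ := by linarith
  rw [le_div_iff₀ hm]
  rcases (norm_nonneg (a - b)).eq_or_lt with h0 | hpos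
  · rw [← h0]; simpa using hC
  · nlinarith

end StrongConcavity

section ValueFunction

variable {F E : Type*} [NormedAddCommGroup F] [NormedAddCommGroup E]
  {Φ : F → E → ℝ} {gradxΦ : F → E → F} {gradyΦ : F → E → E} {k : E → ℝ} {s : Set E}
  {ystar : F → E} {μ Lxx Lxy Lyx K : ℝ}

lemma norm_maximizer_sub_le [InnerProductSpace ℝ E] [CompleteSpace E] (hμ : 0 < μ)
    (hconc : ∀ x, StrongConcaveOn s μ (fun y => Φ x y - k y)) (hmem : ∀ x, ystar x ∈ s)
    (hmax : ∀ x, IsMaxOn (fun y => Φ x y - k y) s (ystar x))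
    (hgrady : ∀ x y, HasGradientAt (Φ x) (gradyΦ x y) y)
    (hlipyx : ∀ y x₁ x₂, ‖gradyΦ x₁ y - gradyΦ x₂ y‖ ≤ Lyx * ‖x₁ - x₂‖) (x₁ x₂ : F) :
    ‖ystar x₁ - ystar x₂‖ ≤ Lyx / μ * ‖x₁ - x₂‖ := by
  have hdiff := abs_sub_le_of_norm_gradient_le (fun y => (hgrady x₁ y).sub (hgrady x₂ y))
    (fun y => hlipyx y x₁ x₂) (ystar x₂) (ystar x₁)
  rw [div_mul_eq_mul_div]
  refine (hconc x₁).norm_sub_le_of_isMaxOn hμ (hconc x₂) (hmem x₁) (hmem x₂) (hmax x₁) (hmax x₂)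
    ((norm_nonneg _).trans (hlipyx (ystar x₁) x₁ x₂)) ?_
  linarith [(le_abs_self _).trans hdiff]

lemma lipschitzWith_gradient_comp_maximizer (hLxy : 0 ≤ Lxy)
    (hlipxx : ∀ y x₁ x₂, ‖gradxΦ x₁ y - gradxΦ x₂ y‖ ≤ Lxx * ‖x₁ - x₂‖)
    (hlipxy : ∀ x y₁ y₂, ‖gradxΦ x y₁ - gradxΦ x y₂‖ ≤ Lxy * ‖y₁ - y₂‖)
    (hystar : ∀ x₁ x₂, ‖ystar x₁ - ystar x₂‖ ≤ K * ‖x₁ - x₂‖) :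
    LipschitzWith (Lxx + Lxy * K).toNNReal (fun x => gradxΦ x (ystar x)) := by
  refine LipschitzWith.of_dist_le' fun x₁ x₂ => ?_
  simp only [dist_eq_norm]
  calc ‖gradxΦ x₁ (ystar x₁) - gradxΦ x₂ (ystar x₂)‖
      ≤ ‖gradxΦ x₁ (ystar x₁) - gradxΦ x₂ (ystar x₁)‖ +
        ‖gradxΦ x₂ (ystar x₁) - gradxΦ x₂ (ystar x₂)‖ := norm_sub_le_norm_sub_add_norm_sub _ _ _
    _ ≤ Lxx * ‖x₁ - x₂‖ + Lxy * (K * ‖x₁ - x₂‖) := by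
        gcongr
        exacts [hlipxx _ x₁ x₂, (hlipxy _ _ _).trans (by gcongr; exact hystar x₁ x₂)]
    _ = (Lxx + Lxy * K) * ‖x₁ - x₂‖ := by ring

lemma hasGradientAt_sub_comp_maximizer [InnerProductSpace ℝ F] [CompleteSpace F] (hLxy : 0 ≤ Lxy)
    (hmax : ∀ x, IsMaxOn (fun y => Φ x y - k y) s (ystar x)) (hmem : ∀ x, ystar x ∈ s)
    (hgradx : ∀ x y, HasGradientAt (fun x' => Φ x' y) (gradxΦ x y) x)
    (hlipxx : ∀ y x₁ x₂, ‖gradxΦ x₁ y - gradxΦ x₂ y‖ ≤ Lxx * ‖x₁ - x₂‖)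
    (hlipxy : ∀ x y₁ y₂, ‖gradxΦ x y₁ - gradxΦ x y₂‖ ≤ Lxy * ‖y₁ - y₂‖)
    (hystar : ∀ x₁ x₂, ‖ystar x₁ - ystar x₂‖ ≤ K * ‖x₁ - x₂‖) (x : F) :
    HasGradientAt (fun x => Φ x (ystar x) - k (ystar x)) (gradxΦ x (ystar x)) x := by
  refine hasGradientAt_of_abs_sub_sub_inner_le (C := Lxx + Lxy * K) fun x' => ?_
  set y := ystar x
  set y' := ystar x'
  have hup : Φ x y' - k y' ≤ Φ x y - k y := hmax x (hmem x')
  have hlow : Φ x' y - k y ≤ Φ x' y' - k y' := hmax x' (hmem x)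
  have hdesc := abs_sub_sub_inner_le_of_lipschitz_gradient (fun z => hgradx z y)
    (fun z₁ z₂ => hlipxx y z₁ z₂) x x'
  have hdesc' := abs_sub_sub_inner_le_of_lipschitz_gradient (fun z => hgradx z y')
    (fun z₁ z₂ => hlipxx y' z₁ z₂) x x'
  have hcross : |⟪gradxΦ x y' - gradxΦ x y, x' - x⟫| ≤ Lxy * K * ‖x' - x‖ ^ 2 :=
    calc |⟪gradxΦ x y' - gradxΦ x y, x' - x⟫|
        ≤ ‖gradxΦ x y' - gradxΦ x y‖ * ‖x' - x‖ := abs_real_inner_le_norm _ _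
      _ ≤ Lxy * (K * ‖x' - x‖) * ‖x' - x‖ := by
          gcongr
          exact (hlipxy x y' y).trans (by gcongr; exact hystar x' x)
      _ = Lxy * K * ‖x' - x‖ ^ 2 := by ring
  rw [inner_sub_left] at hcross
  rw [abs_le] at hdesc hdesc' hcross ⊢
  constructor <;> nlinarith [abs_nonneg ⟪gradxΦ x y' - gradxΦ x y, x' - x⟫]

end ValueFunction

theorem stmt_4_general {d n : ℕ} (Φ : EuclideanSpace ℝ (Fin d) → EuclideanSpace ℝ (Fin n) → ℝ)
    (gradxΦ : EuclideanSpace ℝ (Fin d) → EuclideanSpace ℝ (Fin n) → EuclideanSpace ℝ (Fin d))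
    (gradyΦ : EuclideanSpace ℝ (Fin d) → EuclideanSpace ℝ (Fin n) → EuclideanSpace ℝ (Fin n))
    (μ Lxx Lxy Lyx : ℝ) (hμ : 0 < μ) (hLxy : 0 < Lxy)
    (hgradx : ∀ x y, HasGradientAt (fun x' => Φ x' y) (gradxΦ x y) x)
    (hgrady : ∀ x y, HasGradientAt (Φ x) (gradyΦ x y) y)
    (hsconc : ∀ x, ConvexOn ℝ Set.univ
      (fun y : EuclideanSpace ℝ (Fin n) => -Φ x y - μ / 2 * ‖y‖ ^ 2))
    (hlipyx : ∀ y x₁ x₂, ‖gradyΦ x₁ y - gradyΦ x₂ y‖ ≤ Lyx * ‖x₁ - x₂‖)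
    (hlipxx : ∀ y x₁ x₂, ‖gradxΦ x₁ y - gradxΦ x₂ y‖ ≤ Lxx * ‖x₁ - x₂‖)
    (hlipxy : ∀ x y₁ y₂, ‖gradxΦ x y₁ - gradxΦ x y₂‖ ≤ Lxy * ‖y₁ - y₂‖)
    (h : EuclideanSpace ℝ (Fin n) → EReal)
    (hnobot : ∀ y, h y ≠ ⊥)
    (hconv : ∀ y₁ y₂ : EuclideanSpace ℝ (Fin n), ∀ t : ℝ, 0 ≤ t → t ≤ 1 →
      h (t • y₁ + (1 - t) • y₂) ≤ (t : EReal) * h y₁ + ((1 - t : ℝ) : EReal) * h y₂)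
    (ystar : EuclideanSpace ℝ (Fin d) → EuclideanSpace ℝ (Fin n))
    (hmax : ∀ x, IsMaxOn (fun y => (Φ x y : EReal) - h y) Set.univ (ystar x))
    (hfin : ∀ x, h (ystar x) ≠ ⊤)
    (φ : EuclideanSpace ℝ (Fin d) → ℝ)
    (hφ : ∀ x, φ x = Φ x (ystar x) - (h (ystar x)).toReal) :
    (∀ x, HasGradientAt φ (gradxΦ x (ystar x)) x) ∧
    Continuous (fun x => gradxΦ x (ystar x)) ∧
    LipschitzWith (Lxx + Lxy * Lyx / μ).toNNReal (fun x => gradxΦ x (ystar x)) := by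
  have hconc : ∀ x, StrongConcaveOn {y | h y ≠ ⊤} μ (fun y => Φ x y - (h y).toReal) :=
    fun x => StrongConcaveOn.sub_convexOn
      (neg_neg (Φ x) ▸ (strongConvexOn_iff_convex.mpr (hsconc x)).neg) (subset_univ _)
      (convexOn_toReal_setOf_ne_top hnobot hconv)
  have hmax' := fun x => isMaxOn_sub_toReal hnobot (hmax x) (hfin x)
  have hystar := norm_maximizer_sub_le hμ hconc hfin hmax' hgrady hlipyx
  have hlip := lipschitzWith_gradient_comp_maximizer hLxy.le hlipxx hlipxy hystar
  obtain rfl : φ = _ := funext hφ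
  refine ⟨hasGradientAt_sub_comp_maximizer hLxy.le hmax' hfin hgradx hlipxx hlipxy hystar,
    hlip.continuous, ?_⟩
  rwa [mul_div_assoc]

/-- Smoothness of the value function `φ(x) = max_y (Φ(x,y) - h(y))`: under strong concavity
in `y` and block-wise Lipschitz gradients, `φ` is differentiable with
`∇φ(x) = ∇_x Φ(x, y*(x))`, this gradient map is continuous, and it is
`L_φ = L_xx + L_xy L_yx / μ`-Lipschitz. -/
theorem stmt_4 {d n : ℕ} (Φ : EuclideanSpace ℝ (Fin d) → EuclideanSpace ℝ (Fin n) → ℝ)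
    (gradxΦ : EuclideanSpace ℝ (Fin d) → EuclideanSpace ℝ (Fin n) → EuclideanSpace ℝ (Fin d))
    (gradyΦ : EuclideanSpace ℝ (Fin d) → EuclideanSpace ℝ (Fin n) → EuclideanSpace ℝ (Fin n))
    (μ Lxx Lxy Lyx : ℝ) (hμ : 0 < μ) (hLxx : 0 < Lxx) (hLxy : 0 < Lxy) (hLyx : 0 < Lyx)
    (hgradx : ∀ x y, HasGradientAt (fun x' => Φ x' y) (gradxΦ x y) x)
    (hgrady : ∀ x y, HasGradientAt (Φ x) (gradyΦ x y) y)
    (hsconc : ∀ x, ConvexOn ℝ Set.univ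
      (fun y : EuclideanSpace ℝ (Fin n) => -Φ x y - μ / 2 * ‖y‖ ^ 2))
    (hlipyx : ∀ y x₁ x₂, ‖gradyΦ x₁ y - gradyΦ x₂ y‖ ≤ Lyx * ‖x₁ - x₂‖)
    (hlipxx : ∀ y x₁ x₂, ‖gradxΦ x₁ y - gradxΦ x₂ y‖ ≤ Lxx * ‖x₁ - x₂‖)
    (hlipxy : ∀ x y₁ y₂, ‖gradxΦ x y₁ - gradxΦ x y₂‖ ≤ Lxy * ‖y₁ - y₂‖)
    (h : EuclideanSpace ℝ (Fin n) → EReal)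
    (hproper : ∃ y, h y < ⊤) (hnobot : ∀ y, h y ≠ ⊥)
    (hconv : ∀ y₁ y₂ : EuclideanSpace ℝ (Fin n), ∀ t : ℝ, 0 ≤ t → t ≤ 1 →
      h (t • y₁ + (1 - t) • y₂) ≤ (t : EReal) * h y₁ + ((1 - t : ℝ) : EReal) * h y₂)
    (hlsc : LowerSemicontinuous h)
    (ystar : EuclideanSpace ℝ (Fin d) → EuclideanSpace ℝ (Fin n))
    (hmax : ∀ x, IsMaxOn (fun y => (Φ x y : EReal) - h y) Set.univ (ystar x))
    (hfin : ∀ x, h (ystar x) ≠ ⊤)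
    (φ : EuclideanSpace ℝ (Fin d) → ℝ)
    (hφ : ∀ x, φ x = Φ x (ystar x) - (h (ystar x)).toReal) :
    (∀ x, HasGradientAt φ (gradxΦ x (ystar x)) x) ∧
    Continuous (fun x => gradxΦ x (ystar x)) ∧
    LipschitzWith (Lxx + Lxy * Lyx / μ).toNNReal (fun x => gradxΦ x (ystar x)) :=
  stmt_4_general Φ gradxΦ gradyΦ μ Lxx Lxy Lyx hμ hLxy hgradx hgrady hsconc hlipyx hlipxx hlipxy h
    hnobot hconv ystar hmax hfin φ hφ
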